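/- For all m with 1 ≤ m < ω, the end-homogeneous amalgam of two copies of I_m is I_{m+1}, where I_k is the identity of the coloring of {0,1}^{k+1} by longest common initial segments. -/

import Mathlib

/-- The longest common initial segment of two binary strings. -/
def lcis : List Bool → List Bool → List Bool
  | a :: as, b :: bs => if a = b then a :: lcis as bs else []
  | _, _ => []

theorem lcis_comm : ∀ a b : List Bool, lcis a b = lcis b a := by
  intro a
  induction a with
  | nil => intro b; cases b <;> rfl
  | cons x xs ih =>
    intro b
    cases b with
    | nil => rfl
    | cons y ys =>
      by_cases h : x = y
      · subst h; simp [lcis, ih]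
      · simp [lcis, h, Ne.symm h]

/-- Binary strings of length `m + 1`. -/
def Str (m : ℕ) : Type := {l : List Bool // l.length = m + 1}

/-- The coloring `I_m` on `{0,1}^{m+1}`, coloring a pair by its longest common
initial segment. -/
def colI (m : ℕ) : Sym2 (Str m) → List Bool :=
  Sym2.lift ⟨fun a b => lcis a.1 b.1, fun a b => lcis_comm a.1 b.1⟩

/-- `f` realizes `g`: there is an injection `k` from the field of `g` into the field of `f`
such that differently `f`-colored image pairs come from differently `g`-colored pairs. -/
def Realizes {α β C D : Type*} (f : Sym2 β → C) (g : Sym2 α → D) : Prop :=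
  ∃ k : α ↪ β, ∀ x y u v : α, x ≠ y → u ≠ v →
    f s(k x, k y) ≠ f s(k u, k v) → g s(x, y) ≠ g s(u, v)

/-- The end-homogeneous amalgam of two copies of `I_m`: the two representative colorings are
taken on disjoint fields (the two summands) with disjoint ranges (tagged by `0` and `1`), and
all cross pairs receive one common new color `Sum.inr ()`. -/
def amalg2 (m : ℕ) : Sym2 (Str m ⊕ Str m) → ((Fin 2 × List Bool) ⊕ Unit) :=
  Sym2.lift ⟨fun a b =>
    match a, b with
    | .inl x, .inl y => .inl (0, lcis x.1 y.1)
    | .inr x, .inr y => .inl (1, lcis x.1 y.1)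
    | _, _ => .inr (),
    by rintro (x | x) (y | y) <;> simp [lcis_comm]⟩

/-! Splitting off the first bit identifies `{0,1}^{m+2}` with two disjoint copies of
`{0,1}^{m+1}`. Two strings with the same first bit `b` have common initial segment `b :: w`,
where `w` is that of their tails; strings with different first bits have the empty one. So the
`I_{m+1}`-color of a pair is an injective recoding of its color in the amalgam, and each
coloring realizes the other through this bijection. -/

section Realizes

variable {α β C D : Type*} {f : Sym2 β → C} {g : Sym2 α → D}

theorem realizes_of_map_eq (k : α ↪ β) (φ : D → C)
    (h : ∀ x y, f s(k x, k y) = φ (g s(x, y))) : Realizes f g :=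
  ⟨k, fun x y u v _ _ hne heq => hne (by rw [h, h, heq])⟩

theorem realizes_of_map_eq_of_injective (e : α ≃ β) {φ : D → C} (hφ : Function.Injective φ)
    (h : ∀ x y, f s(e x, e y) = φ (g s(x, y))) : Realizes g f := by
  refine ⟨e.symm.toEmbedding, fun x y u v _ _ hne heq => hne (hφ ?_)⟩
  simpa only [Equiv.coe_toEmbedding, ← h, Equiv.apply_symm_apply] using heq

end Realizes

def consBit (m : ℕ) : Str m ⊕ Str m ≃ Str (m + 1) where
  toFun
    | .inl t => ⟨false :: t.1, by simp [t.2]⟩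
    | .inr t => ⟨true :: t.1, by simp [t.2]⟩
  invFun s := if s.1.headI then .inr ⟨s.1.tail, by simp [s.2]⟩ else .inl ⟨s.1.tail, by simp [s.2]⟩
  left_inv := by rintro (t | t) <;> rfl
  right_inv := by
    rintro ⟨_ | ⟨b, l⟩, hl⟩
    · simp at hl
    · cases b <;> rfl

def amalgColor : (Fin 2 × List Bool) ⊕ Unit → List Bool
  | .inl (i, l) => finTwoEquiv i :: l
  | .inr _ => []

theorem amalgColor_injective : Function.Injective amalgColor := by
  rintro (⟨i, l⟩ | _) (⟨j, l'⟩ | _) h <;>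
    simp_all [amalgColor, finTwoEquiv.injective.eq_iff]

theorem colI_consBit (m : ℕ) (a b : Str m ⊕ Str m) :
    colI (m + 1) s(consBit m a, consBit m b) = amalgColor (amalg2 m s(a, b)) := by
  rcases a with a | a <;> rcases b with b | b <;> rfl

theorem amalgam_of_Im_is_Isucc_general (m : ℕ) :
    Realizes (amalg2 m) (colI (m + 1)) ∧ Realizes (colI (m + 1)) (amalg2 m) :=
  ⟨realizes_of_map_eq_of_injective (consBit m) amalgColor_injective (colI_consBit m),
    realizes_of_map_eq (consBit m).toEmbedding amalgColor (colI_consBit m)⟩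

/-- For all `m ≥ 1`, the end-homogeneous amalgam of two copies of `I_m` is `I_{m+1}`:
each realizes the other. -/
theorem amalgam_of_Im_is_Isucc (m : ℕ) (hm : 1 ≤ m) :
    Realizes (amalg2 m) (colI (m + 1)) ∧ Realizes (colI (m + 1)) (amalg2 m) :=
  amalgam_of_Im_is_Isucc_general m
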